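/- (Hamiltonian completion preserves flow and target map) For any labelled open graph G = (V,E,I,O,λ,α) with Pauli flow, there exists a labelled open graph G' = (V',E',I,O,λ',α') with Pauli flow such that: (i) V ⊆ V', all vertices in V'∖V are labelled Z (measured in the Z basis), (ii) the underlying graph of G' has a Hamiltonian path, and (iii) the target linear maps of G and G' are equal (Z-measured isolated-purpose vertices act trivially). -/

import Mathlib

/-!
Add `card V + 1` fresh vertices, all measured in `Z`, and join each of them to every original
vertex; listing fresh and original vertices alternately gives a Hamiltonian path. A fresh vertex
`j` is corrected by `{j}` and placed before every original vertex in the order, which keeps the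
Pauli flow conditions; and since its effect `⟨0|` forces it to `0`, no edge at it is ever counted,
so the target map is unchanged.
-/

open scoped Classical

/-- Measurement labels: planes XY, XZ, YZ and Pauli bases X, Y, Z. -/
inductive MeasLabel : Type
  | XY | XZ | YZ | X | Y | Z
  deriving DecidableEq

/-- The odd neighbourhood `Odd(K) = {u : |N(u) ∩ K| odd}` of a set of vertices. -/
noncomputable def oddNbhd {V : Type*} [Fintype V] (G : SimpleGraph V) (K : Finset V) :
    Finset V :=
  Finset.univ.filter fun u => Odd (K.filter fun w => G.Adj u w).card

/-- `(p, lt)` is a Pauli flow for the labelled open graph `(G, I, O, lam)`: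
`lt` is a strict partial order and conditions 1–9 of the definition of Pauli
flow hold for every non-output vertex (with `p v ⊆ V ∖ I`). -/
noncomputable def IsPauliFlow {V : Type*} [Fintype V] (G : SimpleGraph V)
    (I O : Finset V) (lam : V → MeasLabel) (p : V → Finset V)
    (lt : V → V → Prop) : Prop :=
  (∀ v, ¬ lt v v) ∧ (∀ a b c, lt a b → lt b c → lt a c) ∧
  ∀ v, v ∉ O →
    ((∀ w ∈ p v, w ∉ I) ∧
     (∀ w ∈ p v, lam w ≠ .X → lam w ≠ .Y → v ≠ w → lt v w) ∧
     (∀ w ∈ oddNbhd G (p v), lam w ≠ .Y → lam w ≠ .Z → v ≠ w → lt v w) ∧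
     (∀ w, (lt w v ∨ w = v) → lam w = .Y → v ≠ w →
        (w ∈ p v ↔ w ∈ oddNbhd G (p v))) ∧
     (lam v = .XY → v ∉ p v ∧ v ∈ oddNbhd G (p v)) ∧
     (lam v = .XZ → v ∈ p v ∧ v ∈ oddNbhd G (p v)) ∧
     (lam v = .YZ → v ∈ p v ∧ v ∉ oddNbhd G (p v)) ∧
     (lam v = .X → v ∈ oddNbhd G (p v)) ∧
     (lam v = .Z → v ∈ p v) ∧
     (lam v = .Y →
        ((v ∉ p v ∧ v ∈ oddNbhd G (p v)) ∨ (v ∈ p v ∧ v ∉ oddNbhd G (p v)))))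

/-- A labelled open graph has Pauli flow if some `(p, lt)` is a Pauli flow. -/
noncomputable def HasPauliFlow {V : Type*} [Fintype V] (G : SimpleGraph V)
    (I O : Finset V) (lam : V → MeasLabel) : Prop :=
  ∃ p lt, IsPauliFlow G I O lam p lt

open Complex

/-- Unnormalised amplitude `⟨+_{λ,α}|t⟩` of a single-qubit measurement effect
(spider convention, so that a Z-measurement with outcome `0` deletes the
vertex exactly). -/
noncomputable def effAmp : MeasLabel → ℝ → Fin 2 → ℂ
  | .XY, α, t => Complex.exp (Complex.I * α * (t : ℕ))
  | .YZ, α, t => 1 + Complex.exp (Complex.I * α) * (-1 : ℂ) ^ (t : ℕ)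
  | .XZ, α, t => (-Complex.I) ^ (t : ℕ) + Complex.exp (Complex.I * α) * Complex.I ^ (t : ℕ)
  | .X, _, t => 1 + (-1 : ℂ) ^ (t : ℕ)
  | .Y, _, t => (-Complex.I) ^ (t : ℕ)
  | .Z, _, t => if t = 0 then 1 else 0

/-- Number of edges of `G` whose endpoints are both `1` in configuration `z`. -/
noncomputable def edgeCountOnes {V : Type*} [Fintype V] (G : SimpleGraph V)
    (z : V → Fin 2) : ℕ :=
  (Finset.univ.filter fun e : Sym2 V => e ∈ G.edgeSet ∧ ∀ w ∈ e, z w = 1).card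

/-- Matrix entry of the target linear map
`T(M) = (∏_{v∉O} ⟨+_{λ(v),α(v)}|_v) E_G N_{V∖I}` of a labelled open graph,
between the input basis configuration `zi` (on `I`) and the output basis
configuration `zo` (on `O`). -/
noncomputable def targetAmp {V : Type*} [Fintype V] (G : SimpleGraph V)
    (I O : Finset V) (lam : V → MeasLabel) (alp : V → ℝ)
    (zi zo : V → Fin 2) : ℂ :=
  ∑ z : V → Fin 2,
    (if (∀ v ∈ I, z v = zi v) ∧ (∀ v ∈ O, z v = zo v) then 1 else 0) *
      (-1 : ℂ) ^ (edgeCountOnes G z) *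
      ∏ v ∈ Finset.univ \ O, effAmp (lam v) (alp v) (z v)

namespace SimpleGraph.Walk

theorem isHamiltonian_ofSupport {V : Type*} [DecidableEq V] {G : SimpleGraph V} {l : List V}
    (hne : l ≠ []) (hchain : l.IsChain G.Adj) (hl : l.Nodup) (hcover : ∀ v, v ∈ l) :
    (ofSupport l hne hchain).IsHamiltonian :=
  (IsPath.mk' (by rwa [support_ofSupport])).isHamiltonian_of_mem (by simpa using hcover)

end SimpleGraph.Walk

section Zigzag

variable {α β : Type*}

def zigzag (f : α → β) : β → List α → List (α ⊕ β)
  | b, [] => [.inr b]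
  | b, a :: l => .inr b :: .inl a :: zigzag f (f a) l

variable (f : α → β)

theorem head?_zigzag (b : β) (l : List α) : (zigzag f b l).head? = some (.inr b) := by
  cases l <;> rfl

theorem zigzag_ne_nil (b : β) (l : List α) : zigzag f b l ≠ [] := by
  cases l <;> simp [zigzag]

@[simp]
theorem inl_mem_zigzag {b : β} {l : List α} {a : α} : .inl a ∈ zigzag f b l ↔ a ∈ l := by
  induction l generalizing b <;> simp_all [zigzag]

@[simp]
theorem inr_mem_zigzag {b c : β} {l : List α} :
    .inr c ∈ zigzag f b l ↔ c = b ∨ ∃ a ∈ l, f a = c := by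
  induction l generalizing b with
  | nil => simp [zigzag]
  | cons a l ih => simp only [zigzag, List.mem_cons, ih]; grind

theorem nodup_zigzag {b : β} {l : List α} (hl : l.Nodup) (hf : f.Injective)
    (hb : ∀ a ∈ l, f a ≠ b) : (zigzag f b l).Nodup := by
  induction l generalizing b with
  | nil => simp [zigzag]
  | cons a l ih =>
    rw [List.nodup_cons] at hl
    simp only [zigzag, List.nodup_cons, List.mem_cons, inl_mem_zigzag, inr_mem_zigzag]
    refine ⟨?_, hl.1, ih hl.2 fun a' ha' h => hl.1 (hf h ▸ ha')⟩
    grind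

theorem isChain_zigzag (b : β) (l : List α) :
    (zigzag f b l).IsChain (completeBipartiteGraph α β).Adj := by
  induction l generalizing b with
  | nil => exact .singleton _
  | cons a l ih =>
    refine .cons_cons (by simp) (List.isChain_cons.2 ⟨?_, ih _⟩)
    simp [head?_zigzag]

end Zigzag

theorem exists_isHamiltonian_of_completeBipartiteGraph_le {V W : Type*} [Fintype V] [Fintype W]
    [DecidableEq V] [DecidableEq W] {G : SimpleGraph (V ⊕ W)} (hG : completeBipartiteGraph V W ≤ G)
    (h : Fintype.card W = Fintype.card V + 1) :
    ∃ (x y : V ⊕ W) (p : G.Walk x y), p.IsHamiltonian := by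
  obtain ⟨g⟩ : Nonempty (Option V ≃ W) := Fintype.card_eq.1 (by simp [h])
  let l := zigzag (g ∘ some) (g none) Finset.univ.toList
  refine ⟨_, _, .ofSupport l (zigzag_ne_nil _ _ _) ((isChain_zigzag _ _ _).imp fun _ _ h => hG h),
    SimpleGraph.Walk.isHamiltonian_ofSupport _ _ ?_ ?_⟩
  · exact nodup_zigzag _ (Finset.nodup_toList _) (g.injective.comp (Option.some_injective _))
      (by simp [g.injective.eq_iff])
  · rintro (a | w)
    · simp [l]
    · obtain ⟨o, rfl⟩ := g.surjective w
      cases o <;> simp [l, g.injective.eq_iff]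

section OddNbhd

variable {V : Type*} [Fintype V]

theorem mem_oddNbhd_singleton (G : SimpleGraph V) (v w : V) :
    w ∈ oddNbhd G {v} ↔ G.Adj w v := by
  by_cases h : G.Adj w v <;> simp [oddNbhd, Finset.filter_singleton, h]

theorem apply_mem_oddNbhd_map {W : Type*} [Fintype W] (G : SimpleGraph W) (f : V ↪ W)
    (s : Finset V) (v : V) : f v ∈ oddNbhd G (s.map f) ↔ v ∈ oddNbhd (G.comap f) s := by
  simp [oddNbhd, Finset.filter_map, Finset.card_map]

end OddNbhd

-- The `Fintype` instance of the function type is implicit so that the lemma also rewrites sums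
-- elaborated with the classical `DecidableEq` instance, as in `targetAmp`.
theorem Fintype.sum_fun_sum_eq_sum_sum_elim {V W κ M : Type*} [Fintype V] [Fintype W]
    [DecidableEq V] [DecidableEq W] [Fintype κ] [AddCommMonoid M] {_ : Fintype (V ⊕ W → κ)}
    (F : (V ⊕ W → κ) → M) : ∑ z, F z = ∑ x : V → κ, ∑ y : W → κ, F (Sum.elim x y) := by
  rw [← Fintype.sum_prod_type']
  exact Fintype.sum_equiv (Equiv.sumArrowEquivProdArrow V W κ) _ _ fun z => by
    simp [Equiv.sumArrowEquivProdArrow]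

section ZExtension

open Sum

variable {V W : Type*}

def newBefore (lt : V → V → Prop) : V ⊕ W → V ⊕ W → Prop
  | inl a, inl b => lt a b
  | inr _, inl _ => True
  | _, _ => False

variable [Fintype V] [Fintype W]

theorem hasPauliFlow_extend_Z (G' : SimpleGraph (V ⊕ W)) {I O : Finset V} {lam : V → MeasLabel}
    (h : HasPauliFlow (G'.comap inl) I O lam) :
    HasPauliFlow G' (I.map ⟨inl, inl_injective⟩) (O.map ⟨inl, inl_injective⟩)
      (Sum.elim lam fun _ => .Z) := by
  obtain ⟨p, lt, irrefl, trans, hflow⟩ := h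
  refine ⟨Sum.elim (fun a => (p a).map ⟨inl, inl_injective⟩) fun j => {inr j}, newBefore lt,
    ?_, ?_, ?_⟩
  · rintro (a | j) <;> simp [newBefore, irrefl]
  · rintro (a | j) (b | k) (c | l) hab hbc
    · exact trans a b c hab hbc
    all_goals simp_all [newBefore]
  · rintro (a | j) hv
    · have hodd := apply_mem_oddNbhd_map G' ⟨inl, inl_injective⟩ (p a)
      simp only [Function.Embedding.coeFn_mk] at hodd
      simpa [Sum.forall, newBefore, hodd] using hflow a (by simpa using hv)
    · simp [Sum.forall, newBefore, mem_oddNbhd_singleton]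

-- The `DecidableEq (V ⊕ W)` instance is implicit for the same reason as above.
theorem Finset.prod_compl_map_inl {M : Type*} [CommMonoid M] [DecidableEq V]
    {_ : DecidableEq (V ⊕ W)} (O : Finset V) (f : V ⊕ W → M) :
    ∏ v ∈ univ \ O.map ⟨inl, inl_injective⟩, f v =
      (∏ a ∈ univ \ O, f (inl a)) * ∏ j, f (inr j) := by
  rw [show univ \ O.map ⟨inl, inl_injective⟩ = (univ \ O).disjSum univ by ext (a | j) <;> simp,
    prod_disjSum]

theorem edgeCountOnes_elim_zero (G' : SimpleGraph (V ⊕ W)) (z : V → Fin 2) :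
    edgeCountOnes G' (Sum.elim z 0) = edgeCountOnes (G'.comap inl) z := by
  refine (Finset.card_nbij (Sym2.map inl) ?_ (Sym2.map.injective inl_injective).injOn ?_).symm
  · intro e he
    induction e using Sym2.ind
    simp_all
  · intro e he
    induction e using Sym2.ind with | _ x y => ?_
    obtain ⟨hadj, hx, hy⟩ : G'.Adj x y ∧ Sum.elim z 0 x = 1 ∧ Sum.elim z 0 y = 1 := by
      simpa only [Finset.coe_filter, Finset.mem_univ, true_and, Set.mem_ofPred_eq,
        SimpleGraph.mem_edgeSet, Sym2.mem_iff, forall_eq_or_imp, forall_eq] using he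
    rcases x with a | j
    · rcases y with b | k
      · exact ⟨s(a, b), by simpa using ⟨hadj, hx, hy⟩, rfl⟩
      · simp at hy
    · simp at hx

theorem targetAmp_extend_Z (G' : SimpleGraph (V ⊕ W)) (I O : Finset V) (lam : V → MeasLabel)
    (alp : V → ℝ) (β : W → ℝ) (zi zo : V → Fin 2) :
    targetAmp G' (I.map ⟨inl, inl_injective⟩) (O.map ⟨inl, inl_injective⟩)
        (Sum.elim lam fun _ => .Z) (Sum.elim alp β)
        (Sum.elim zi fun _ => 0) (Sum.elim zo fun _ => 0) =
      targetAmp (G'.comap inl) I O lam alp zi zo := by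
  unfold targetAmp
  rw [Fintype.sum_fun_sum_eq_sum_sum_elim]
  refine Finset.sum_congr rfl fun z _ => ?_
  rw [Finset.sum_eq_single 0]
  · simp [Finset.prod_compl_map_inl, edgeCountOnes_elim_zero, effAmp]
  · intro y _ hy
    obtain ⟨j, hj⟩ := Function.ne_iff.1 hy
    rw [Finset.prod_compl_map_inl,
      Finset.prod_eq_zero (Finset.mem_univ j) (by simpa [effAmp] using hj), mul_zero, mul_zero]
  · simp

end ZExtension

open Sum in
/-- Hamiltonian completion preserves flow and the target map: any labelled
open graph with Pauli flow can be extended, by adding vertices all measured in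
the Z basis, to a labelled open graph with Pauli flow whose underlying graph
has a Hamiltonian path and whose target linear map is equal to the original
one. -/
theorem hamiltonian_completion {V : Type*} [Fintype V]
    (G : SimpleGraph V) (I O : Finset V) (lam : V → MeasLabel) (alp : V → ℝ)
    (h : HasPauliFlow G I O lam) :
    ∃ (n : ℕ) (G' : SimpleGraph (V ⊕ Fin n)) (lam' : V ⊕ Fin n → MeasLabel)
      (alp' : V ⊕ Fin n → ℝ),
      HasPauliFlow G' (I.map ⟨inl, Sum.inl_injective⟩)
        (O.map ⟨inl, Sum.inl_injective⟩) lam' ∧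
      (∀ j : Fin n, lam' (inr j) = .Z) ∧
      (∀ w : V, lam' (inl w) = lam w ∧ alp' (inl w) = alp w) ∧
      (∃ (x y : V ⊕ Fin n) (p : G'.Walk x y), p.IsHamiltonian) ∧
      (∀ zi zo : V → Fin 2,
        targetAmp G' (I.map ⟨inl, Sum.inl_injective⟩)
            (O.map ⟨inl, Sum.inl_injective⟩) lam' alp'
            (Sum.elim zi fun _ => 0) (Sum.elim zo fun _ => 0)
          = targetAmp G I O lam alp zi zo) := by
  let G' := (G ⊕g ⊥) ⊔ completeBipartiteGraph V (Fin (Fintype.card V + 1))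
  have hG : G'.comap inl = G := by ext; simp [G']
  refine ⟨_, G', Sum.elim lam fun _ => .Z, Sum.elim alp 0, hasPauliFlow_extend_Z G' (hG ▸ h),
    fun _ => rfl, fun _ => ⟨rfl, rfl⟩,
    exists_isHamiltonian_of_completeBipartiteGraph_le le_sup_right (by simp),
    fun zi zo => by rw [targetAmp_extend_Z, hG]⟩
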